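/- Let P be a point on a circle of radius R centered at O, and let n ≥ 4 be even. The n points Ã₁,…,Ãₙ obtained as second intersections of n equiangular lines through P with the circle form a regular n-gon, and for each 1 ≤ k ≤ n/2 − 1 the sum of the areas of triangles ÃₖÃₖ₊₁P and Ãₖ₊ₙ⁄₂Ãₖ₊ₙ⁄₂₊₁P equals the sum of the areas of triangles ÃₖÃₖ₊₁O and Ãₖ₊ₙ⁄₂Ãₖ₊ₙ⁄₂₊₁O. -/

import Mathlib

/-!
A chord from `P = O + R e^{iψ}` in direction `e^{iα}` ends at `O + R e^{i(2α - ψ + π)}`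
(inscribed angle theorem), so rotating the line through `P` by `π/n` moves the second
intersection by `2π/n` around the circle: the `Ãₖ` form a regular `n`-gon. Then
`Ãₖ₊ₙ/₂ = 2O - Ãₖ`, so the sides `ÃₖÃₖ₊₁` and `Ãₖ₊ₙ/₂Ãₖ₊ₙ/₂₊₁` are opposite, and the sum of the
signed areas of the triangles they span with a common apex does not depend on the apex.
Both triangles with apex `P` are positively oriented, so their areas add like signed areas.
-/

open Real

/-- Area of the triangle `a b c` in the plane `ℂ`: half the absolute value of the cross
product of `b - a` and `c - a`. -/
noncomputable def triArea (a b c : ℂ) : ℝ :=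
  |((b - a) * (starRingEnd ℂ) (c - a)).im| / 2

open Complex ComplexConjugate

noncomputable def signedArea (a b c : ℂ) : ℝ :=
  (conj (b - a) * (c - a)).im / 2

lemma triArea_eq_abs_signedArea (a b c : ℂ) : triArea a b c = |signedArea a b c| := by
  simp only [triArea, signedArea, abs_div, abs_two, mul_im, conj_re, conj_im]
  rw [← abs_neg]
  ring_nf

lemma signedArea_add_signedArea_reflect (a b o p : ℂ) :
    signedArea a b p + signedArea (2 * o - a) (2 * o - b) p = 2 * signedArea a b o := by
  simp only [signedArea, mul_im, conj_re, conj_im, sub_re, sub_im, mul_re, re_ofNat, im_ofNat]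
  ring

lemma signedArea_reflect_self (a b o : ℂ) :
    signedArea (2 * o - a) (2 * o - b) o = signedArea a b o := by
  simp only [signedArea, mul_im, conj_re, conj_im, sub_re, sub_im, mul_re, re_ofNat, im_ofNat]
  ring

theorem triArea_add_triArea_reflect (a b o p : ℂ) (ha : 0 ≤ signedArea a b p)
    (hb : 0 ≤ signedArea (2 * o - a) (2 * o - b) p) :
    triArea a b p + triArea (2 * o - a) (2 * o - b) p =
      triArea a b o + triArea (2 * o - a) (2 * o - b) o := by
  have hsum := signedArea_add_signedArea_reflect a b o p
  have ho : 0 ≤ signedArea a b o := by linarith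
  simp only [triArea_eq_abs_signedArea, abs_of_nonneg ha, abs_of_nonneg hb,
    signedArea_reflect_self, abs_of_nonneg ho]
  linarith

lemma sin_pi_div_natCast_pos {n : ℕ} (hn : 1 < n) : 0 < Real.sin (π / n) :=
  Real.sin_pos_of_pos_of_lt_pi (div_pos pi_pos (by positivity))
    (div_lt_self pi_pos (by exact_mod_cast hn))

lemma signedArea_add_mul_exp (p : ℂ) (r s x y : ℝ) :
    signedArea (p + r * exp (x * I)) (p + s * exp (y * I)) p = r * s * Real.sin (y - x) / 2 := by
  simp only [signedArea, add_sub_add_left_eq_sub, sub_add_cancel_left, exp_mul_I, ← ofReal_cos,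
    ← ofReal_sin, mul_im, mul_re, sub_re, sub_im, neg_re, neg_im, add_re, add_im, conj_re, conj_im,
    ofReal_re, ofReal_im, I_re, I_im, Real.sin_sub]
  ring

/-- Expanding `‖R u + ρ v‖² = R²` gives `ρ = -R (u v̄ + ū v)`, and then `v v̄ = 1` collapses
`R u + ρ v`. -/
lemma add_mul_exp_eq_neg_conj_mul_sq (R ρ : ℝ) (u v : ℂ) (hu : ‖u‖ = 1) (hv : ‖v‖ = 1)
    (hρ : ρ ≠ 0) (h : ‖R * u + ρ * v‖ = R) : R * u + ρ * v = R * (-conj u * v ^ 2) := by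
  have huu : u * conj u = 1 := by rw [RCLike.mul_conj]; simp [hu]
  have hvv : v * conj v = 1 := by rw [RCLike.mul_conj]; simp [hv]
  have hnorm := RCLike.mul_conj ((R : ℂ) * u + ρ * v)
  simp only [h, map_add, map_mul, conj_ofReal] at hnorm
  have hρ' : (ρ : ℂ) = -R * (u * conj v + conj u * v) := by
    have : (ρ : ℂ) * (ρ + R * (u * conj v + conj u * v)) = 0 := by
      linear_combination hnorm - (R:ℂ)^2 * huu - (ρ : ℂ)^2 * hvv
    have := (mul_eq_zero.mp this).resolve_left (by exact_mod_cast hρ)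
    linear_combination this
  rw [hρ']
  linear_combination (-R * u) * hvv

lemma neg_conj_exp_mul_sq_exp (ψ α : ℝ) :
    -conj (exp (ψ * I)) * exp (α * I) ^ 2 = exp ((2 * α - ψ + π : ℝ) * I) := by
  rw [← exp_conj, ← Complex.exp_nat_mul, map_mul, conj_ofReal, conj_I, ← neg_mul_eq_neg_mul,
    ← Complex.exp_add, ← exp_add_pi_mul_I]
  push_cast
  ring_nf

lemma eq_add_mul_exp_of_dist_eq (o : ℂ) (R ρ ψ α : ℝ) (hρ : ρ ≠ 0)
    (h : dist o (o + R * exp (ψ * I) + ρ * exp (α * I)) = R) :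
    o + R * exp (ψ * I) + ρ * exp (α * I) = o + R * exp ((2 * α - ψ + π : ℝ) * I) := by
  rw [dist_comm, Complex.dist_eq, add_assoc, add_sub_cancel_left] at h
  rw [add_assoc, add_mul_exp_eq_neg_conj_mul_sq R ρ _ _ (by simp) (by simp) hρ h,
    neg_conj_exp_mul_sq_exp]

lemma add_mul_exp_add_pi (o : ℂ) (R x : ℝ) :
    o + R * exp ((x + π : ℝ) * I) = 2 * o - (o + R * exp (x * I)) := by
  rw [ofReal_add, add_mul, exp_add_pi_mul_I]
  ring

theorem baumkuchen_stmt3_general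
    (O P : ℂ) (R : ℝ) (hP : dist O P = R)
    (n : ℕ) (hev : Even n) (θ : ℝ) (ρ : ℕ → ℝ) (A : ℕ → ℂ)
    (hA : ∀ k : ℕ, 1 ≤ k → k ≤ n →
      A k = P + (ρ k : ℂ) * Complex.exp ((↑(θ + (k : ℝ) * π / n)) * Complex.I))
    (hρ : ∀ k : ℕ, 1 ≤ k → k ≤ n → 0 < ρ k)
    (hcirc : ∀ k : ℕ, 1 ≤ k → k ≤ n → dist O (A k) = R) :
    (∃ φ : ℝ, ∀ k : ℕ, 1 ≤ k → k ≤ n →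
        A k = O + (R : ℂ) * Complex.exp ((↑(φ + 2 * π * (k : ℝ) / n)) * Complex.I)) ∧
    (∀ k : ℕ, 1 ≤ k → k ≤ n / 2 - 1 →
      triArea (A k) (A (k + 1)) P + triArea (A (k + n / 2)) (A (k + n / 2 + 1)) P =
      triArea (A k) (A (k + 1)) O + triArea (A (k + n / 2)) (A (k + n / 2 + 1)) O) := by
  obtain ⟨m, hm⟩ := hev
  obtain ⟨ψ, hPO⟩ : ∃ ψ : ℝ, P = O + R * exp (ψ * I) := ⟨arg (P - O), by
    rw [← hP, dist_comm, Complex.dist_eq, norm_mul_exp_arg_mul_I, add_sub_cancel]⟩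
  have hpoly : ∀ k : ℕ, 1 ≤ k → k ≤ n →
      A k = O + R * exp ((2 * θ - ψ + π + 2 * π * k / n : ℝ) * I) := by
    intro k hk1 hkn
    rw [hA k hk1 hkn, hPO, eq_add_mul_exp_of_dist_eq O R (ρ k) _ _ (hρ k hk1 hkn).ne'
      (by rw [← hPO, ← hA k hk1 hkn]; exact hcirc k hk1 hkn)]
    ring_nf
  refine ⟨⟨_, hpoly⟩, fun k hk1 hk2 => ?_⟩
  have hantipodal : ∀ j : ℕ, 1 ≤ j → j + m ≤ n → A (j + m) = 2 * O - A j := by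
    intro j hj1 hjn
    have hm0 : (m : ℝ) ≠ 0 := by norm_cast; omega
    have hangle : 2 * θ - ψ + π + 2 * π * (j + m : ℕ) / n = 2 * θ - ψ + π + 2 * π * j / n + π := by
      rw [hm]; push_cast; field_simp; ring
    rw [hpoly (j + m) (by omega) hjn, hpoly j hj1 (by omega), hangle, add_mul_exp_add_pi]
  have horient : ∀ j : ℕ, 1 ≤ j → j + 1 ≤ n → 0 ≤ signedArea (A j) (A (j + 1)) P := by
    intro j hj1 hjn
    rw [hA j hj1 (by omega), hA (j + 1) (by omega) hjn, signedArea_add_mul_exp,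
      show θ + ((j + 1 : ℕ) : ℝ) * π / n - (θ + j * π / n) = π / n by push_cast; ring]
    have := hρ j hj1 (by omega)
    have := hρ (j + 1) (by omega) hjn
    have := sin_pi_div_natCast_pos (n := n) (by omega)
    positivity
  have hfirst := horient k hk1 (by omega)
  have hsecond := horient (k + m) (by omega) (by omega)
  rw [hantipodal k hk1 (by omega), add_right_comm, hantipodal (k + 1) (by omega) (by omega)]
    at hsecond
  rw [show n / 2 = m by omega, hantipodal k hk1 (by omega), add_right_comm,
    hantipodal (k + 1) (by omega) (by omega)]
  exact triArea_add_triArea_reflect _ _ _ _ hfirst hsecond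

/-- `P` on the circle of radius `R` about `O`, `n ≥ 4` even, and
`Ã k = P + ρ k · e^{i(θ + kπ/n)}` (`ρ k > 0`) the second intersections of the `n`
equiangular lines through `P` with the circle, numbered consecutively (`1 ≤ k ≤ n`).
Then (1) the points `Ã₁, …, Ãₙ` form a regular `n`-gon inscribed in the circle, and
(2) for `1 ≤ k ≤ n/2 − 1`, the areas of triangles `ÃₖÃₖ₊₁P` and `Ãₖ₊ₙ/₂Ãₖ₊ₙ/₂₊₁P`
sum to the areas of triangles `ÃₖÃₖ₊₁O` and `Ãₖ₊ₙ/₂Ãₖ₊ₙ/₂₊₁O`. -/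
theorem baumkuchen_stmt3
    (O P : ℂ) (R : ℝ) (hR : 0 < R) (hP : dist O P = R)
    (n : ℕ) (hn : 4 ≤ n) (hev : Even n) (θ : ℝ) (ρ : ℕ → ℝ) (A : ℕ → ℂ)
    (hA : ∀ k : ℕ, 1 ≤ k → k ≤ n →
      A k = P + (ρ k : ℂ) * Complex.exp ((↑(θ + (k : ℝ) * π / n)) * Complex.I))
    (hρ : ∀ k : ℕ, 1 ≤ k → k ≤ n → 0 < ρ k)
    (hcirc : ∀ k : ℕ, 1 ≤ k → k ≤ n → dist O (A k) = R) :
    (∃ φ : ℝ, ∀ k : ℕ, 1 ≤ k → k ≤ n →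
        A k = O + (R : ℂ) * Complex.exp ((↑(φ + 2 * π * (k : ℝ) / n)) * Complex.I)) ∧
    (∀ k : ℕ, 1 ≤ k → k ≤ n / 2 - 1 →
      triArea (A k) (A (k + 1)) P + triArea (A (k + n / 2)) (A (k + n / 2 + 1)) P =
      triArea (A k) (A (k + 1)) O + triArea (A (k + n / 2)) (A (k + n / 2 + 1)) O) :=
  baumkuchen_stmt3_general O P R hP n hev θ ρ A hA hρ hcirc
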